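/- arXiv:2411.15176 — 5 statements merged into one kernel-verified Lean document; each statement's English description precedes it below -/
import Mathlib

section
/- Fix θ ∈ (0, π) and φ ∈ ℝ. Then the function (θ', φ') ↦ (1 − cos θ · cos θ' − sin θ · sin θ' · cos(φ − φ')) / ((θ − θ')² + sin²θ · (φ − φ')²), defined for (θ', φ') ≠ (θ, φ), tends to 1/2 as (θ', φ') → (θ, φ). -/
/-!
Write `u = θ - θ'`, `v = φ - φ'`, `s = sin θ`. Since `cos θ cos θ' + sin θ sin θ' = cos u`,
the numerator is `(1 - cos u) + s sin θ' (1 - cos v)`. Replacing `1 - cos` by half the square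
and `sin θ'` by `s` turns it into half the denominator `u² + s² v²`; the three errors are
`O(u⁴)`, `O(s² v⁴)` and `O(s |u| v²)`, each `o(u² + s² v²)` because `s > 0`.
-/

open Filter Topology Real

lemma abs_one_sub_cos_sub_sq_div_two_le (x : ℝ) : |1 - cos x - x ^ 2 / 2| ≤ x ^ 4 / 24 := by
  -- `1 - cos x = 2 sin² (x/2)`, so the left side is `2 (sin² (x/2) - (x/2)²)`.
  have hfactor : 1 - cos x - x ^ 2 / 2 = -2 * ((x / 2 - sin (x / 2)) * (x / 2 + sin (x / 2))) := by
    have := sin_sq_eq_half_sub (x / 2)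
    rw [show 2 * (x / 2) = x by ring] at this
    linear_combination (-2) * this
  have hsub : |x / 2 - sin (x / 2)| ≤ |x / 2| ^ 3 / 6 := abs_sub_sin_le _
  have hadd : |x / 2 + sin (x / 2)| ≤ 2 * |x / 2| :=
    (abs_add_le _ _).trans (by linarith [abs_sin_le_abs (x := x / 2)])
  calc |1 - cos x - x ^ 2 / 2|
      = 2 * (|x / 2 - sin (x / 2)| * |x / 2 + sin (x / 2)|) := by
        rw [hfactor, abs_mul, abs_mul]; norm_num
    _ ≤ 2 * (|x / 2| ^ 3 / 6 * (2 * |x / 2|)) := by gcongr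
    _ = x ^ 4 / 24 := by
        rw [abs_div, abs_two, ← (by decide : Even 4).pow_abs x]; ring

lemma one_sub_cos_mul_cos_sub_sin_mul_sin_mul_cos (a b c : ℝ) :
    1 - cos a * cos b - sin a * sin b * cos c =
      (1 - cos (a - b)) + sin a * sin b * (1 - cos c) := by
  rw [cos_sub]; ring

lemma abs_one_sub_cos_mul_cos_sub_sin_mul_sin_mul_cos_sub_half_le {a : ℝ} (ha : 0 < sin a)
    (b c : ℝ) :
    |1 - cos a * cos b - sin a * sin b * cos c - ((a - b) ^ 2 + sin a ^ 2 * c ^ 2) / 2| ≤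
      (((a - b) ^ 2 + c ^ 2) / 24 + |a - b| / (2 * sin a)) * ((a - b) ^ 2 + sin a ^ 2 * c ^ 2) := by
  rw [show 1 - cos a * cos b - sin a * sin b * cos c - ((a - b) ^ 2 + sin a ^ 2 * c ^ 2) / 2 =
      (1 - cos (a - b) - (a - b) ^ 2 / 2) + sin a ^ 2 * (1 - cos c - c ^ 2 / 2)
        + sin a * (sin b - sin a) * (1 - cos c) by
    rw [one_sub_cos_mul_cos_sub_sin_mul_sin_mul_cos]; ring]
  set s := sin a
  set u := a - b
  have hu := abs_one_sub_cos_sub_sq_div_two_le u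
  have hc := abs_one_sub_cos_sub_sq_div_two_le c
  have hsin : |sin b - s| ≤ |u| := by
    rw [show |u| = |b - a| from abs_sub_comm a b]; exact abs_sin_sub_sin_le b a
  have hc0 : 0 ≤ 1 - cos c := by linarith [cos_le_one c]
  have hc2 : 1 - cos c ≤ c ^ 2 / 2 := by linarith [one_sub_sq_div_two_le_cos (x := c)]
  have hcross : |s * (sin b - s) * (1 - cos c)| ≤ s * |u| * (c ^ 2 / 2) := by
    rw [abs_mul, abs_mul, abs_of_pos ha, abs_of_nonneg hc0]
    gcongr
  calc |(1 - cos u - u ^ 2 / 2) + s ^ 2 * (1 - cos c - c ^ 2 / 2)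
          + s * (sin b - s) * (1 - cos c)|
      ≤ |1 - cos u - u ^ 2 / 2| + s ^ 2 * |1 - cos c - c ^ 2 / 2|
          + |s * (sin b - s) * (1 - cos c)| := by
        rw [← abs_of_nonneg (sq_nonneg s), ← abs_mul, abs_of_nonneg (sq_nonneg s)]
        exact (abs_add_le _ _).trans (by gcongr; exact abs_add_le _ _)
    _ ≤ u ^ 4 / 24 + s ^ 2 * (c ^ 4 / 24) + s * |u| * (c ^ 2 / 2) := by gcongr
    _ ≤ ((u ^ 2 + c ^ 2) / 24 + |u| / (2 * s)) * (u ^ 2 + s ^ 2 * c ^ 2) := by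
        have hexpand : ((u ^ 2 + c ^ 2) / 24 + |u| / (2 * s)) * (u ^ 2 + s ^ 2 * c ^ 2) =
            (u ^ 4 / 24 + s ^ 2 * (c ^ 4 / 24) + s * |u| * (c ^ 2 / 2))
              + ((u ^ 2 * s ^ 2 * c ^ 2 + c ^ 2 * u ^ 2) / 24 + |u| * u ^ 2 / (2 * s)) := by
          field_simp; ring
        rw [hexpand]
        exact le_add_of_nonneg_right (by positivity)

theorem green_kernel_ratio_tendsto_half (θ φ : ℝ) (hθ : θ ∈ Set.Ioo 0 Real.pi) :
    Filter.Tendsto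
      (fun p : ℝ × ℝ =>
        (1 - Real.cos θ * Real.cos p.1 - Real.sin θ * Real.sin p.1 * Real.cos (φ - p.2)) /
          ((θ - p.1) ^ 2 + Real.sin θ ^ 2 * (φ - p.2) ^ 2))
      (𝓝[≠] ((θ, φ) : ℝ × ℝ)) (𝓝 (1 / 2)) := by
  have hs : 0 < sin θ := sin_pos_of_pos_of_lt_pi hθ.1 hθ.2
  set B : ℝ × ℝ → ℝ := fun p => ((θ - p.1) ^ 2 + (φ - p.2) ^ 2) / 24 + |θ - p.1| / (2 * sin θ)
  have hB : Tendsto B (𝓝[≠] (θ, φ)) (𝓝 0) := by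
    have hcont : Continuous B := by fun_prop
    simpa [B] using (hcont.tendsto (θ, φ)).mono_left nhdsWithin_le_nhds
  have hbound : ∀ᶠ p in 𝓝[≠] (θ, φ),
      ‖(1 - cos θ * cos p.1 - sin θ * sin p.1 * cos (φ - p.2)) /
          ((θ - p.1) ^ 2 + sin θ ^ 2 * (φ - p.2) ^ 2) - 1 / 2‖ ≤ B p := by
    filter_upwards [self_mem_nhdsWithin] with p hp
    have hD : 0 < (θ - p.1) ^ 2 + sin θ ^ 2 * (φ - p.2) ^ 2 := by
      rcases eq_or_ne p.1 θ with h1 | h1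
      · have h2 : φ - p.2 ≠ 0 := sub_ne_zero.mpr fun h2 => hp (Prod.ext h1 h2.symm)
        positivity
      · have h1' : θ - p.1 ≠ 0 := sub_ne_zero.mpr (Ne.symm h1)
        positivity
    rw [Real.norm_eq_abs, div_sub' hD.ne', mul_one_div, abs_div, abs_of_pos hD,
      div_le_iff₀ hD]
    exact abs_one_sub_cos_mul_cos_sub_sin_mul_sin_mul_cos_sub_half_le hs p.1 (φ - p.2)
  exact tendsto_sub_nhds_zero_iff.mp (squeeze_zero_norm' hbound hB)
end

section
/- Let γ > 1 and a, b > 0. Suppose ε₀ ∈ (0,1) and s : (0, ε₀) → ℝ satisfies, for every ε ∈ (0, ε₀), both ε ≤ s(ε) ≤ √ε and (ε/s(ε))^{2/(γ−1)} · a = b · ln(1/ε) / ln(1/s(ε)). Then s(ε)/ε → (a/b)^{(γ−1)/2} as ε → 0⁺. -/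
open Filter Topology

/-- Asymptotics of the vortex-core radius: if for all small `ε` one has `ε ≤ s(ε) ≤ √ε` and
`(ε/s(ε))^{2/(γ-1)} a = b ln(1/ε)/ln(1/s(ε))`, then `s(ε)/ε → (a/b)^{(γ-1)/2}` as `ε → 0⁺`. -/
theorem vortex_core_radius_asymptotics (γ a b : ℝ) (hγ : 1 < γ) (ha : 0 < a) (hb : 0 < b)
    (ε₀ : ℝ) (hε₀ : ε₀ ∈ Set.Ioo (0 : ℝ) 1) (s : ℝ → ℝ)
    (hs : ∀ ε ∈ Set.Ioo (0 : ℝ) ε₀,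
      ε ≤ s ε ∧ s ε ≤ Real.sqrt ε ∧
        (ε / s ε) ^ (2 / (γ - 1)) * a = b * Real.log (1 / ε) / Real.log (1 / s ε)) :
    Filter.Tendsto (fun ε => s ε / ε) (𝓝[>] (0 : ℝ)) (𝓝 ((a / b) ^ ((γ - 1) / 2))) := by
  obtain ⟨hε₀0, hε₀1⟩ := hε₀
  set q := (γ - 1) / 2 with hqdef
  have hγ1 : (0:ℝ) < γ - 1 := sub_pos.mpr hγ
  have hq0 : 0 < q := by positivity
  have hpq : (2 / (γ - 1)) * q = 1 := by
    rw [hqdef]; field_simp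
  set C := |Real.log ((a / b) ^ q)| with hCdef
  have hC0 : 0 ≤ C := abs_nonneg _
  have key : ∀ ε ∈ Set.Ioo (0:ℝ) ε₀,
      s ε / ε = (a * Real.log (1 / s ε) / (b * Real.log (1 / ε))) ^ q ∧
      0 < Real.log (1 / s ε) ∧ 0 < Real.log (1 / ε) ∧
      Real.log (1 / s ε) ≤ Real.log (1 / ε) ∧
      Real.log (1 / ε) - C ≤ Real.log (1 / s ε) := by
    intro ε hε
    obtain ⟨h1, h2, heq⟩ := hs ε hε
    have hεp : 0 < ε := hε.1
    have hε1 : ε < 1 := hε.2.trans hε₀1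
    have hsp : 0 < s ε := hεp.trans_le h1
    have hs1 : s ε < 1 := by
      calc s ε ≤ Real.sqrt ε := h2
        _ < 1 := by
          rw [show (1:ℝ) = Real.sqrt 1 by simp]
          exact Real.sqrt_lt_sqrt hεp.le hε1
    have hlogs : 0 < Real.log (1 / s ε) := by
      rw [one_div, Real.log_inv]; exact neg_pos.mpr (Real.log_neg hsp hs1)
    have hlogε : 0 < Real.log (1 / ε) := by
      rw [one_div, Real.log_inv]; exact neg_pos.mpr (Real.log_neg hεp hε1)
    have hle : Real.log (1 / s ε) ≤ Real.log (1 / ε) :=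
      Real.log_le_log (by positivity) (one_div_le_one_div_of_le hεp h1)
    have hrpos : 0 < ε / s ε := div_pos hεp hsp
    have hrp : (ε / s ε) ^ (2 / (γ - 1))
        = b * (Real.log (1 / ε) / Real.log (1 / s ε)) / a := by
      rw [eq_div_iff ha.ne', heq, mul_div_assoc]
    have hXY : 0 < Real.log (1 / ε) / Real.log (1 / s ε) := div_pos hlogε hlogs
    have hBL : 0 < b * (Real.log (1 / ε) / Real.log (1 / s ε)) / a :=
      div_pos (mul_pos hb hXY) ha
    have hr_eq : ε / s ε
        = (b * (Real.log (1 / ε) / Real.log (1 / s ε)) / a) ^ q := by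
      rw [← hrp, ← Real.rpow_mul hrpos.le, hpq, Real.rpow_one]
    have hkey1 : s ε / ε = (a * Real.log (1 / s ε) / (b * Real.log (1 / ε))) ^ q := by
      have h4 : a * Real.log (1 / s ε) / (b * Real.log (1 / ε))
          = (b * (Real.log (1 / ε) / Real.log (1 / s ε)) / a)⁻¹ := by
        field_simp
      rw [h4, Real.inv_rpow hBL.le, ← hr_eq, inv_div]
    have hub : s ε / ε ≤ (a / b) ^ q := by
      rw [hkey1]
      have hnum : a * Real.log (1 / s ε) / (b * Real.log (1 / ε)) ≤ a / b := by
        rw [div_le_div_iff₀ (by positivity) hb]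
        have h6 := mul_le_mul_of_nonneg_left hle (mul_nonneg ha.le hb.le)
        nlinarith [h6]
      exact Real.rpow_le_rpow
        (div_nonneg (mul_nonneg ha.le hlogs.le) (mul_nonneg hb.le hlogε.le)) hnum hq0.le
    have hratio1 : (1:ℝ) ≤ s ε / ε := (one_le_div hεp).mpr h1
    have hlog_ratio : Real.log (s ε / ε) ≤ C := by
      calc Real.log (s ε / ε) ≤ Real.log ((a / b) ^ q) :=
            Real.log_le_log (lt_of_lt_of_le one_pos hratio1) hub
        _ ≤ C := le_abs_self _
    have hYlb : Real.log (1 / ε) - C ≤ Real.log (1 / s ε) := by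
      have hsplit : Real.log (1 / s ε) = Real.log (1 / ε) - Real.log (s ε / ε) := by
        rw [show (1:ℝ) / s ε = (1 / ε) / (s ε / ε) by field_simp,
          Real.log_div (by positivity) (by positivity)]
      linarith
    exact ⟨hkey1, hlogs, hlogε, hle, hYlb⟩
  have hmem : Set.Ioo (0:ℝ) ε₀ ∈ 𝓝[>] (0:ℝ) :=
    Ioo_mem_nhdsGT_of_mem ⟨le_refl 0, hε₀0⟩
  have hlogtop : Tendsto (fun ε : ℝ => Real.log (1 / ε)) (𝓝[>] (0:ℝ)) atTop := by
    have h := Real.tendsto_log_nhdsGT_zero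
    have h2 := tendsto_neg_atBot_atTop.comp h
    simp only [one_div, Real.log_inv]
    exact h2
  have hT : Tendsto (fun ε => Real.log (1 / s ε) / Real.log (1 / ε)) (𝓝[>] (0:ℝ)) (𝓝 1) := by
    have hlow : Tendsto (fun ε : ℝ => 1 - C / Real.log (1 / ε)) (𝓝[>] (0:ℝ)) (𝓝 1) := by
      have h0 : Tendsto (fun ε : ℝ => C / Real.log (1 / ε)) (𝓝[>] (0:ℝ)) (𝓝 0) :=
        Tendsto.div_atTop tendsto_const_nhds hlogtop
      simpa using (tendsto_const_nhds (α := ℝ)).sub h0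
    apply tendsto_of_tendsto_of_tendsto_of_le_of_le' hlow tendsto_const_nhds
    · filter_upwards [hmem] with ε hε
      obtain ⟨_, hY, hX, hle, hYlb⟩ := key ε hε
      have h5 : 1 - C / Real.log (1 / ε) = (Real.log (1 / ε) - C) / Real.log (1 / ε) := by
        field_simp
      rw [h5]
      gcongr
    · filter_upwards [hmem] with ε hε
      obtain ⟨_, hY, hX, hle, hYlb⟩ := key ε hε
      exact (div_le_one hX).mpr hle
  have hAB : Tendsto (fun ε => a * Real.log (1 / s ε) / (b * Real.log (1 / ε)))
      (𝓝[>] (0:ℝ)) (𝓝 (a / b)) := by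
    have h' : Tendsto (fun ε => a / b * (Real.log (1 / s ε) / Real.log (1 / ε)))
        (𝓝[>] (0:ℝ)) (𝓝 (a / b * 1)) := tendsto_const_nhds.mul hT
    rw [mul_one] at h'
    refine h'.congr fun ε => ?_
    rw [div_mul_div_comm]
  have hfin : Tendsto (fun ε => (a * Real.log (1 / s ε) / (b * Real.log (1 / ε))) ^ q)
      (𝓝[>] (0:ℝ)) (𝓝 ((a / b) ^ q)) := hAB.rpow_const (Or.inr hq0.le)
  exact Tendsto.congr' (by filter_upwards [hmem] with ε hε; exact (key ε hε).1.symm) hfin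
end

section
/- Let μ ∈ ℝ and β ≠ 0. Let g : ℝ → ℝ be C¹ with g(1) = μ and |g'(r) − β| ≤ |β|/4 for all r ∈ [1/2, 3/2]. Let φ : ℝ² → ℝ be differentiable with |φ(x)| ≤ δ and |∇φ(x)| ≤ δ for all x ∈ ℝ², where 0 < δ ≤ |β|/8. Then for every ξ ∈ ℝ there exists a unique t ∈ [−1/2, 1/2] such that g(1 + t) + φ( (1+t)·(cos ξ, sin ξ) ) = μ, and this t satisfies |t| ≤ 4δ/|β|. -/
/-! Along the ray `r ↦ r (cos ξ, sin ξ)` the function `f(t) = g(1 + t) + φ(…) - μ` has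
`|f(0)| ≤ δ` and `|f' - β| ≤ |β|/4 + δ ≤ 3|β|/8`, so `f / β` has derivative at least `5/8` on
`[-1/2, 1/2]`. Hence it is strictly increasing there, and the mean value theorem places its
sign change in `[-4δ/|β|, 4δ/|β|]`. -/

open Set

theorem exists_mem_Icc_eq_zero_of_le_deriv {f : ℝ → ℝ} {a s c : ℝ} (hs : 0 ≤ s)
    (hf : DifferentiableOn ℝ f (Icc (a - s) (a + s)))
    (hf' : ∀ t ∈ Icc (a - s) (a + s), c ≤ deriv f t) (ha : |f a| ≤ c * s) :
    ∃ t ∈ Icc (a - s) (a + s), f t = 0 := by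
  have hslope := (convex_Icc (a - s) (a + s)).mul_sub_le_image_sub_of_le_deriv hf.continuousOn
    (hf.mono interior_subset) fun t ht => hf' t (interior_subset ht)
  have hleft := hslope (a - s) ⟨le_rfl, by linarith⟩ a ⟨by linarith, by linarith⟩ (by linarith)
  have hright := hslope a ⟨by linarith, by linarith⟩ (a + s) ⟨by linarith, le_rfl⟩ (by linarith)
  rw [sub_sub_cancel] at hleft
  rw [add_sub_cancel_left] at hright
  obtain ⟨hlo, hhi⟩ := abs_le.1 ha
  exact intermediate_value_Icc (by linarith) hf.continuousOn ⟨by linarith, by linarith⟩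

theorem exists_unique_zero_of_abs_deriv_sub_le {f : ℝ → ℝ} {β δ : ℝ} (hβ : β ≠ 0)
    (hf : Differentiable ℝ f)
    (hf' : ∀ t ∈ Icc (-(1 / 2) : ℝ) (1 / 2), |deriv f t - β| ≤ 3 * |β| / 8)
    (hf0 : |f 0| ≤ δ) (hδ : 0 ≤ δ) (hδβ : δ ≤ |β| / 8) :
    ∃ t : ℝ, (t ∈ Icc (-(1 / 2) : ℝ) (1 / 2) ∧ f t = 0 ∧ |t| ≤ 4 * δ / |β|) ∧
      ∀ t' ∈ Icc (-(1 / 2) : ℝ) (1 / 2), f t' = 0 → t' = t := by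
  have hβpos : 0 < |β| := abs_pos.2 hβ
  set F : ℝ → ℝ := fun t => f t / β
  have hFd : Differentiable ℝ F := hf.div_const β
  have hF' : ∀ t ∈ Icc (-(1 / 2) : ℝ) (1 / 2), 5 / 8 ≤ deriv F t := by
    intro t ht
    have hclose : |deriv F t - 1| ≤ 3 / 8 := by
      rw [deriv_div_const, div_sub_one hβ, abs_div, div_le_iff₀ hβpos]
      linarith [hf' t ht]
    linarith [(abs_le.1 hclose).1]
  set s := 4 * δ / |β|
  have hs : 0 ≤ s := by positivity
  have hs_le : s ≤ 1 / 2 := by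
    rw [div_le_iff₀ hβpos]
    linarith
  have hF0 : |F 0| ≤ 5 / 8 * s := by
    rw [abs_div, div_le_iff₀ hβpos, mul_assoc, div_mul_cancel₀ _ hβpos.ne']
    linarith
  obtain ⟨t, ht, hFt⟩ := exists_mem_Icc_eq_zero_of_le_deriv hs hFd.differentiableOn
    (fun t ht => hF' t ⟨by linarith [ht.1], by linarith [ht.2]⟩) hF0
  rw [zero_sub, zero_add] at ht
  have ht_mem : t ∈ Icc (-(1 / 2) : ℝ) (1 / 2) := ⟨by linarith [ht.1], by linarith [ht.2]⟩
  have hinj : InjOn F (Icc (-(1 / 2) : ℝ) (1 / 2)) :=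
    (strictMonoOn_of_deriv_pos (convex_Icc _ _) hFd.continuous.continuousOn fun x hx =>
      by linarith [hF' x (interior_subset hx)]).injOn
  refine ⟨t, ⟨ht_mem, div_eq_zero_iff.1 hFt |>.resolve_right hβ, abs_le.2 ht⟩, ?_⟩
  intro t' ht' hft'
  exact hinj ht' ht_mem (by simp only [F, hft', hFt, zero_div])

theorem abs_deriv_comp_smul_le {E : Type*} [NormedAddCommGroup E] [NormedSpace ℝ E]
    {φ : E → ℝ} {u : E} {r : ℝ} (hφ : DifferentiableAt ℝ φ (r • u)) :
    |deriv (fun r => φ (r • u)) r| ≤ ‖fderiv ℝ φ (r • u)‖ * ‖u‖ := by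
  have hray : HasDerivAt (fun r : ℝ => r • u) u r := by
    simpa using (hasDerivAt_id r).smul_const u
  have hcomp : HasDerivAt (fun r => φ (r • u)) (fderiv ℝ φ (r • u) u) r :=
    hφ.hasFDerivAt.comp_hasDerivAt r hray
  rw [hcomp.deriv]
  exact (fderiv ℝ φ (r • u)).le_opNorm u

theorem abs_deriv_add_comp_smul_sub_le {E : Type*} [NormedAddCommGroup E] [NormedSpace ℝ E]
    {g : ℝ → ℝ} {φ : E → ℝ} {u : E} {r β δ : ℝ} (hu : ‖u‖ ≤ 1)
    (hg : DifferentiableAt ℝ g r) (hφ : DifferentiableAt ℝ φ (r • u))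
    (hφ' : ‖fderiv ℝ φ (r • u)‖ ≤ δ) :
    |deriv (fun r => g r + φ (r • u)) r - β| ≤ |deriv g r - β| + δ := by
  have hray : DifferentiableAt ℝ (fun r => φ (r • u)) r :=
    hφ.comp r (differentiableAt_id.smul_const u)
  rw [deriv_fun_add hg hray, add_sub_right_comm]
  calc |deriv g r - β + deriv (fun r => φ (r • u)) r|
      ≤ |deriv g r - β| + |deriv (fun r => φ (r • u)) r| := abs_add_le _ _
    _ ≤ |deriv g r - β| + δ := by
      gcongr
      exact (abs_deriv_comp_smul_le hφ).trans
        ((mul_le_of_le_one_right (norm_nonneg _) hu).trans hφ')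

/-- Quantitative implicit-function step: the perturbed level set
`{ g(|x|) + φ(x) = μ }` near the unit circle is a polar graph `r = 1 + t(ξ)` with
`|t| ≤ 4δ/|β|`. -/
theorem perturbed_level_set_polar_graph (μ β : ℝ) (hβ : β ≠ 0)
    (g : ℝ → ℝ) (hg : ContDiff ℝ 1 g) (hg1 : g 1 = μ)
    (hg' : ∀ r ∈ Set.Icc (1 / 2 : ℝ) (3 / 2), |deriv g r - β| ≤ |β| / 4)
    (φ : ℝ × ℝ → ℝ) (hφd : Differentiable ℝ φ)
    (δ : ℝ) (hδ0 : 0 < δ) (hδβ : δ ≤ |β| / 8)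
    (hφ : ∀ x, |φ x| ≤ δ) (hφ' : ∀ x, ‖fderiv ℝ φ x‖ ≤ δ) :
    ∀ ξ : ℝ, ∃ t : ℝ,
      (t ∈ Set.Icc (-(1 / 2) : ℝ) (1 / 2) ∧
        g (1 + t) + φ ((1 + t) * Real.cos ξ, (1 + t) * Real.sin ξ) = μ ∧
        |t| ≤ 4 * δ / |β|) ∧
      ∀ t' ∈ Set.Icc (-(1 / 2) : ℝ) (1 / 2),
        g (1 + t') + φ ((1 + t') * Real.cos ξ, (1 + t') * Real.sin ξ) = μ → t' = t := by
  intro ξ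
  set u : ℝ × ℝ := (Real.cos ξ, Real.sin ξ)
  have hu : ‖u‖ ≤ 1 := max_le (Real.abs_cos_le_one ξ) (Real.abs_sin_le_one ξ)
  have hgd : Differentiable ℝ g := hg.differentiable one_ne_zero
  set G : ℝ → ℝ := fun r => g r + φ (r • u)
  have hGd : Differentiable ℝ G := hgd.add (hφd.comp (differentiable_id.smul_const u))
  have hf' : ∀ t ∈ Icc (-(1 / 2) : ℝ) (1 / 2),
      |deriv (fun t => G (1 + t) - μ) t - β| ≤ 3 * |β| / 8 := by
    intro t ht
    rw [deriv_sub_const, deriv_comp_const_add]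
    calc |deriv G (1 + t) - β| ≤ |deriv g (1 + t) - β| + δ :=
          abs_deriv_add_comp_smul_sub_le hu (hgd _) (hφd _) (hφ' _)
      _ ≤ |β| / 4 + δ := by gcongr; exact hg' _ ⟨by linarith [ht.1], by linarith [ht.2]⟩
      _ ≤ 3 * |β| / 8 := by linarith
  have hf0 : |G (1 + 0) - μ| ≤ δ := by simpa [G, hg1] using hφ u
  simpa [G, u, sub_eq_zero] using exists_unique_zero_of_abs_deriv_sub_le hβ
    ((hGd.comp (differentiable_const 1 |>.add differentiable_id)).sub_const μ) hf' hf0 hδ0.le hδβ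
end

section
/- Let γ > 1, let ε > 0 and s > 0, and let W : [0, ∞) → ℝ be C² on [0,1] with W(r) > 0 for r ∈ [0,1), W(1) = 0, W'(0) = 0, W'(1) < 0, and −(W''(r) + W'(r)/r) = W(r)^γ for all r ∈ (0,1). Define V : ℝ² → ℝ by V(x) = (ε/s)^{2/(γ−1)} · W(|x|/s) for |x| ≤ s, and V(x) = (ε/s)^{2/(γ−1)} · W'(1) · ln(|x|/s) for |x| ≥ s. Then V is continuously differentiable on all of ℝ², and at every point x with |x| ≠ s the function V is twice differentiable and satisfies −ΔV(x) = ε^{−2} · (max(V(x), 0))^γ. -/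
/-!
Write `V(x) = c Φ(|x|²/s²)` with `c = (ε/s)^(2/(γ-1))`, `Φ(u) = W(√u)` on `[0, 1]` and
`Φ(u) = (W'(1)/2) log u` for `u ≥ 1`. For `G(|x|²)` on `ℝⁿ` the gradient is `2 G'(|x|²) x` and
the Laplacian is `2n G'(|x|²) + 4 |x|² G''(|x|²)`; for `n = 2` and `G = c Φ(· / s²)` this is
`(c/s²) (W'' + W'/r)` inside the core and `0` outside, and `c^(γ-1) = ε²/s²` turns the ODE into
the claimed equation.

`W(1) = 0` and the common slope `W'(1)/2` make `Φ` `C¹` across `u = 1`. At `r = 0` the ODE forces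
`W'(r)/r → W''(0) = -W(0)^γ/2`, so `Φ` is `C¹` at `u = 0` too. There `G''` need not exist, but the
gradient `2 G'(|x|²) x` vanishes at the origin, so continuity of `G'` already gives the second
derivative `2 G'(0) · id`.
-/

open Set Filter Topology Asymptotics

theorem hasFDerivAt_smul_of_eq_zero {𝕜 E F : Type*} [NontriviallyNormedField 𝕜]
    [NormedAddCommGroup E] [NormedSpace 𝕜 E] [NormedAddCommGroup F] [NormedSpace 𝕜 F]
    {k : E → 𝕜} {D : E → F} {D' : E →L[𝕜] F} {x : E}
    (hk : ContinuousAt k x) (hD : HasFDerivAt D D' x) (hD0 : D x = 0) :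
    HasFDerivAt (fun z => k z • D z) (k x • D') x := by
  have hsmall : (fun z => k z - k x) =o[𝓝 x] (fun _ => (1 : 𝕜)) :=
    (isLittleO_one_iff 𝕜).2 (by simpa using hk.tendsto.sub_const (k x))
  have h0 : HasFDerivAt (fun z => (k z - k x) • D z) (0 : E →L[𝕜] F) x := by
    rw [hasFDerivAt_iff_isLittleO]
    simpa [hD0] using hsmall.smul_isBigO hD.isBigO_sub
  convert h0.add (hD.const_smul (k x)) using 1
  · ext z; simp [sub_smul]
  · simp

theorem hasDerivAt_of_eventually_hasDerivAt {E : Type*} [NormedAddCommGroup E]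
    [NormedSpace ℝ E] {f g : ℝ → E} {x : ℝ} (hd : ∀ᶠ y in 𝓝[≠] x, HasDerivAt f (g y) y)
    (hf : ContinuousAt f x) (hg : ContinuousAt g x) : HasDerivAt f (g x) x := by
  set s := {y | HasDerivAt f (g y) y}
  have hdiff : DifferentiableOn ℝ f s := fun y hy => hy.differentiableAt.differentiableWithinAt
  have hderiv : ∀ l ≤ 𝓝[≠] x, Tendsto (deriv f) l (𝓝 (g x)) := fun l hl =>
    (hg.tendsto.mono_left (hl.trans nhdsWithin_le_nhds)).congr'
      (Filter.mem_of_superset (hl hd) fun y hy => hy.deriv.symm)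
  have hGT : 𝓝[>] x ≤ 𝓝[≠] x := nhdsWithin_mono _ fun y hy => ne_of_gt hy
  have hLT : 𝓝[<] x ≤ 𝓝[≠] x := nhdsWithin_mono _ fun y hy => ne_of_lt hy
  have hR := hasDerivWithinAt_Ici_of_tendsto_deriv hdiff hf.continuousWithinAt (hGT hd)
    (hderiv _ hGT)
  have hL := hasDerivWithinAt_Iic_of_tendsto_deriv hdiff hf.continuousWithinAt (hLT hd)
    (hderiv _ hLT)
  simpa using hL.union hR

theorem hasDerivAt_derivWithin_Icc {f : ℝ → ℝ} {a b r : ℝ} (hf : DifferentiableOn ℝ f (Icc a b))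
    (hr : r ∈ Ioo a b) : HasDerivAt f (derivWithin f (Icc a b) r) r := by
  rw [derivWithin_of_mem_nhds (Icc_mem_nhds hr.1 hr.2)]
  exact ((hf r (Ioo_subset_Icc_self hr)).differentiableAt (Icc_mem_nhds hr.1 hr.2)).hasDerivAt

theorem HasDerivAt.const_mul_comp_div_const {f : ℝ → ℝ} {f' a c t : ℝ}
    (hf : HasDerivAt f f' (t / a)) : HasDerivAt (fun t => c * f (t / a)) (c / a * f') t :=
  ((hf.comp t ((hasDerivAt_id' t).div_const a)).const_mul c).congr_deriv (by ring)

theorem tendsto_sqrt_nhdsGT_zero : Tendsto (√·) (𝓝[>] 0) (𝓝[>] 0) := by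
  refine tendsto_nhdsWithin_iff.2 ⟨?_, ?_⟩
  · simpa using (Real.continuous_sqrt.tendsto 0).mono_left nhdsWithin_le_nhds
  · filter_upwards [self_mem_nhdsWithin] with u hu using Real.sqrt_pos.2 hu

theorem sqrt_mem_Ioo_zero_one {u : ℝ} (hu : u ∈ Ioo (0 : ℝ) 1) : √u ∈ Ioo (0 : ℝ) 1 :=
  ⟨Real.sqrt_pos.2 hu.1, (Real.sqrt_lt' one_pos).2 (by simpa using hu.2)⟩

theorem continuousOn_comp_sqrt_Icc {f : ℝ → ℝ} (hf : ContinuousOn f (Icc 0 1)) :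
    ContinuousOn (fun u => f √u) (Icc 0 1) :=
  hf.comp Real.continuous_sqrt.continuousOn fun u hu =>
    ⟨Real.sqrt_nonneg u, Real.sqrt_le_one.2 hu.2⟩

theorem tendsto_div_self_of_radial_ode {w₁ w₂ g : ℝ → ℝ} {a g₀ : ℝ}
    (hw₁ : HasDerivWithinAt w₁ a (Ioi 0) 0) (hw₂ : Tendsto w₂ (𝓝[>] 0) (𝓝 a))
    (hg : Tendsto g (𝓝[>] 0) (𝓝 g₀)) (hode : ∀ᶠ r in 𝓝[>] 0, -(w₂ r + w₁ r / r) = g r) :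
    Tendsto (fun r => w₁ r / r) (𝓝[>] 0) (𝓝 (-g₀ / 2)) := by
  have hlim : Tendsto (fun r => w₁ r / r) (𝓝[>] 0) (𝓝 (-g₀ - a)) :=
    (hg.neg.sub hw₂).congr' (by filter_upwards [hode] with r hr; linarith)
  -- `w₁ r = r * (w₁ r / r) → 0`, so the slope of `w₁` at `0` is `w₁ r / r`
  have hw₁0 : w₁ 0 = 0 := by
    have h := (tendsto_id.mono_left nhdsWithin_le_nhds).mul hlim
    rw [zero_mul] at h
    refine tendsto_nhds_unique hw₁.continuousWithinAt (h.congr' ?_)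
    filter_upwards [self_mem_nhdsWithin] with r hr
    exact mul_div_cancel₀ _ (ne_of_gt hr)
  have hslope : Tendsto (fun r => w₁ r / r) (𝓝[>] 0) (𝓝 a) := by
    refine ((hasDerivWithinAt_iff_tendsto_slope' (lt_irrefl 0)).1 hw₁).congr' ?_
    filter_upwards with r
    simp [slope_def_field, hw₁0]
  have ha : a = -g₀ - a := tendsto_nhds_unique hslope hlim
  convert hslope using 2
  linarith

section Radial

variable {E : Type*} [NormedAddCommGroup E] [InnerProductSpace ℝ E] {G G' : ℝ → ℝ} {g : ℝ}
  {x : E}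

variable (E) in
/-- `innerSL ℝ` as a bilinear map: Mathlib types it as sesquilinear even over `ℝ`. -/
noncomputable def innerBilin : E →L[ℝ] E →L[ℝ] ℝ := innerSL ℝ

theorem innerBilin_apply_apply (v w : E) : innerBilin E v w = inner ℝ v w := rfl

theorem hasFDerivAt_comp_norm_sq (hG : HasDerivAt G g (‖x‖ ^ 2)) :
    HasFDerivAt (fun y : E => G (‖y‖ ^ 2)) ((2 * g) • innerBilin E x) x := by
  refine (hG.comp_hasFDerivAt x (hasStrictFDerivAt_norm_sq x).hasFDerivAt).congr_fderiv ?_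
  ext v; simp [innerBilin_apply_apply]; ring

theorem fderiv_comp_norm_sq (hG : ∀ t, HasDerivAt G (G' t) t) :
    fderiv ℝ (fun y : E => G (‖y‖ ^ 2)) = fun z => (2 * G' (‖z‖ ^ 2)) • innerBilin E z :=
  funext fun _ => (hasFDerivAt_comp_norm_sq (hG _)).fderiv

theorem hasFDerivAt_fderiv_comp_norm_sq (hG : ∀ t, HasDerivAt G (G' t) t)
    (hG' : HasDerivAt G' g (‖x‖ ^ 2)) :
    HasFDerivAt (fderiv ℝ (fun y : E => G (‖y‖ ^ 2)))
      ((2 * G' (‖x‖ ^ 2)) • innerBilin E +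
        ((4 * g) • innerBilin E x).smulRight (innerBilin E x)) x := by
  rw [fderiv_comp_norm_sq hG]
  refine (((hasFDerivAt_comp_norm_sq hG').const_mul 2).smul
    (innerBilin E).hasFDerivAt).congr_fderiv ?_
  ext v w
  simp only [add_apply, smul_apply, ContinuousLinearMap.smulRight_apply, smul_eq_mul]
  ring

theorem hasFDerivAt_fderiv_comp_norm_sq_zero (hG : ∀ t, HasDerivAt G (G' t) t)
    (hG' : ContinuousAt G' 0) :
    HasFDerivAt (fderiv ℝ (fun y : E => G (‖y‖ ^ 2))) ((2 * G' 0) • innerBilin E) 0 := by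
  rw [fderiv_comp_norm_sq hG]
  have hk : ContinuousAt (fun z : E => 2 * G' (‖z‖ ^ 2)) 0 := by
    refine continuousAt_const.mul (ContinuousAt.comp (g := G') ?_ (by fun_prop))
    simpa using hG'
  simpa using hasFDerivAt_smul_of_eq_zero hk (innerBilin E).hasFDerivAt (map_zero _)

theorem fderiv_apply_of_hasFDerivAt {f : E → E →L[ℝ] ℝ} {Λ : E →L[ℝ] E →L[ℝ] ℝ}
    (h : HasFDerivAt f Λ x) (v w : E) : fderiv ℝ (fun z => f z v) x w = Λ w v := by
  simp [(h.clm_apply (hasFDerivAt_const v x)).fderiv]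

end Radial

section Euclidean

variable {ι : Type*} [Fintype ι] [DecidableEq ι] {G G' : ℝ → ℝ} {g : ℝ}
  {x : EuclideanSpace ℝ ι}

theorem sum_innerBilin_single_single :
    ∑ i : ι, innerBilin (EuclideanSpace ℝ ι) (EuclideanSpace.single i 1)
      (EuclideanSpace.single i 1) = Fintype.card ι := by
  simp [innerBilin_apply_apply]

theorem sum_innerBilin_sq_single (x : EuclideanSpace ℝ ι) :
    ∑ i : ι, innerBilin (EuclideanSpace ℝ ι) x (EuclideanSpace.single i 1) ^ 2 = ‖x‖ ^ 2 := by
  simp [innerBilin_apply_apply, EuclideanSpace.inner_single_right,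
    EuclideanSpace.real_norm_sq_eq]

theorem sum_fderiv_fderiv_comp_norm_sq (hG : ∀ t, HasDerivAt G (G' t) t)
    (hG' : HasDerivAt G' g (‖x‖ ^ 2)) :
    ∑ i, fderiv ℝ (fun z => fderiv ℝ (fun y : EuclideanSpace ℝ ι => G (‖y‖ ^ 2)) z
      (EuclideanSpace.single i 1)) x (EuclideanSpace.single i 1)
      = 2 * Fintype.card ι * G' (‖x‖ ^ 2) + 4 * ‖x‖ ^ 2 * g := by
  have h := hasFDerivAt_fderiv_comp_norm_sq hG hG'
  simp only [fderiv_apply_of_hasFDerivAt h, add_apply, smul_apply,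
    ContinuousLinearMap.smulRight_apply, smul_eq_mul, Finset.sum_add_distrib, ← Finset.mul_sum]
  simp_rw [mul_assoc, ← sq, ← Finset.mul_sum, sum_innerBilin_single_single,
    sum_innerBilin_sq_single]
  ring

theorem sum_fderiv_fderiv_comp_norm_sq_zero (hG : ∀ t, HasDerivAt G (G' t) t)
    (hG' : ContinuousAt G' 0) :
    ∑ i, fderiv ℝ (fun z => fderiv ℝ (fun y : EuclideanSpace ℝ ι => G (‖y‖ ^ 2)) z
      (EuclideanSpace.single i 1)) 0 (EuclideanSpace.single i 1)
      = 2 * Fintype.card ι * G' 0 := by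
  have h := hasFDerivAt_fderiv_comp_norm_sq_zero (E := EuclideanSpace ℝ ι) hG hG'
  simp only [fderiv_apply_of_hasFDerivAt h, smul_apply, smul_eq_mul, ← Finset.mul_sum,
    sum_innerBilin_single_single]
  ring

end Euclidean

section Plasma

variable {γ : ℝ} {W : ℝ → ℝ}

theorem radial_ode_derivWithin (hW2 : ContDiffOn ℝ 2 W (Icc 0 1))
    (hODE : ∀ r ∈ Ioo (0 : ℝ) 1, -(deriv (deriv W) r + deriv W r / r) = W r ^ γ) {r : ℝ}
    (hr : r ∈ Ioo (0 : ℝ) 1) :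
    -(derivWithin (derivWithin W (Icc 0 1)) (Icc 0 1) r + derivWithin W (Icc 0 1) r / r)
      = W r ^ γ := by
  have hW₁ := (hW2.derivWithin (uniqueDiffOn_Icc one_pos) (m := 1) (by norm_num)).differentiableOn
    one_ne_zero
  have hderiv : deriv W =ᶠ[𝓝 r] derivWithin W (Icc 0 1) := by
    filter_upwards [isOpen_Ioo.mem_nhds hr] with y hy
    exact (hasDerivAt_derivWithin_Icc (hW2.differentiableOn two_ne_zero) hy).deriv
  rw [← hODE r hr, hderiv.deriv_eq, hderiv.eq_of_nhds, (hasDerivAt_derivWithin_Icc hW₁ hr).deriv]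

theorem tendsto_derivWithin_div_self (hγ : 0 < γ) (hW2 : ContDiffOn ℝ 2 W (Icc 0 1))
    (hODE : ∀ r ∈ Ioo (0 : ℝ) 1, -(deriv (deriv W) r + deriv W r / r) = W r ^ γ) :
    Tendsto (fun r => derivWithin W (Icc 0 1) r / r) (𝓝[>] 0) (𝓝 (-(W 0 ^ γ) / 2)) := by
  have hI : Icc (0 : ℝ) 1 ∈ 𝓝[>] 0 := Icc_mem_nhdsGT one_pos
  have h0 : (0 : ℝ) ∈ Icc (0 : ℝ) 1 := ⟨le_rfl, zero_le_one⟩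
  have hW₁ := hW2.derivWithin (uniqueDiffOn_Icc one_pos) (m := 1) (by norm_num)
  have hW₂ := hW₁.derivWithin (uniqueDiffOn_Icc one_pos) (m := 0) (by norm_num)
  refine tendsto_div_self_of_radial_ode ?_ ((hW₂.continuousOn 0 h0).mono_of_mem_nhdsWithin hI)
    ((Real.continuousAt_rpow_const _ _ (Or.inr hγ.le)).tendsto.comp
      ((hW2.continuousOn 0 h0).mono_of_mem_nhdsWithin hI))
    (by filter_upwards [Ioo_mem_nhdsGT one_pos] with r hr using radial_ode_derivWithin hW2 hODE hr)
  exact ((hW₁.differentiableOn one_ne_zero 0 h0).hasDerivWithinAt).mono_of_mem_nhdsWithin hI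

/-- The profile of `V` as a function of `u = |x|²/s²` at unit scale. For `u ≤ 0` it is continued
by its tangent line at `0`, whose slope `W''(0)/2 = -W(0)^γ/4` is forced by the ODE at `r = 0`, so
that it is differentiable on all of `ℝ`. -/
noncomputable def sqRadialProfile (γ : ℝ) (W : ℝ → ℝ) (u : ℝ) : ℝ :=
  if u ≤ 0 then W 0 - W 0 ^ γ / 4 * u
  else if u ≤ 1 then W √u else derivWithin W (Icc 0 1) 1 / 2 * Real.log u

noncomputable def sqRadialProfileDeriv (γ : ℝ) (W : ℝ → ℝ) (u : ℝ) : ℝ :=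
  if u ≤ 0 then -(W 0 ^ γ / 4)
  else if u ≤ 1 then derivWithin W (Icc 0 1) √u / (2 * √u)
  else derivWithin W (Icc 0 1) 1 / (2 * u)

theorem sqRadialProfile_of_nonpos {u : ℝ} (hu : u ≤ 0) :
    sqRadialProfile γ W u = W 0 - W 0 ^ γ / 4 * u := if_pos hu

theorem sqRadialProfile_of_mem_Ioc {u : ℝ} (hu : u ∈ Ioc (0 : ℝ) 1) :
    sqRadialProfile γ W u = W √u := (if_neg (not_le.2 hu.1)).trans (if_pos hu.2)

theorem sqRadialProfile_of_one_lt {u : ℝ} (hu : 1 < u) :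
    sqRadialProfile γ W u = derivWithin W (Icc 0 1) 1 / 2 * Real.log u :=
  (if_neg (by linarith)).trans (if_neg (not_le.2 hu))

theorem sqRadialProfileDeriv_of_nonpos {u : ℝ} (hu : u ≤ 0) :
    sqRadialProfileDeriv γ W u = -(W 0 ^ γ / 4) := if_pos hu

theorem sqRadialProfileDeriv_of_mem_Ioc {u : ℝ} (hu : u ∈ Ioc (0 : ℝ) 1) :
    sqRadialProfileDeriv γ W u = derivWithin W (Icc 0 1) √u / (2 * √u) :=
  (if_neg (not_le.2 hu.1)).trans (if_pos hu.2)

theorem sqRadialProfileDeriv_of_one_lt {u : ℝ} (hu : 1 < u) :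
    sqRadialProfileDeriv γ W u = derivWithin W (Icc 0 1) 1 / (2 * u) :=
  (if_neg (by linarith)).trans (if_neg (not_le.2 hu))

theorem hasDerivAt_sqRadialProfile_of_ne (hW2 : ContDiffOn ℝ 2 W (Icc 0 1)) {u : ℝ}
    (hu0 : u ≠ 0) (hu1 : u ≠ 1) :
    HasDerivAt (sqRadialProfile γ W) (sqRadialProfileDeriv γ W u) u := by
  rcases lt_or_gt_of_ne hu0 with hneg | hpos
  · rw [sqRadialProfileDeriv_of_nonpos hneg.le]
    refine (((hasDerivAt_id' u).const_mul (W 0 ^ γ / 4)).const_sub (W 0)).congr_deriv (by ring)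
      |>.congr_of_eventuallyEq ?_
    filter_upwards [Iio_mem_nhds hneg] with v hv using sqRadialProfile_of_nonpos hv.le
  rcases lt_or_gt_of_ne hu1 with hlt | hgt
  · rw [sqRadialProfileDeriv_of_mem_Ioc ⟨hpos, hlt.le⟩]
    refine ((hasDerivAt_derivWithin_Icc (hW2.differentiableOn two_ne_zero)
      (sqrt_mem_Ioo_zero_one ⟨hpos, hlt⟩)).comp u (Real.hasDerivAt_sqrt hpos.ne')).congr_deriv
      (by ring) |>.congr_of_eventuallyEq ?_
    filter_upwards [isOpen_Ioo.mem_nhds ⟨hpos, hlt⟩] with v hv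
    exact sqRadialProfile_of_mem_Ioc (Ioo_subset_Ioc_self hv)
  · rw [sqRadialProfileDeriv_of_one_lt hgt]
    refine ((Real.hasDerivAt_log (by positivity)).const_mul
      (derivWithin W (Icc 0 1) 1 / 2)).congr_deriv (by field_simp) |>.congr_of_eventuallyEq ?_
    filter_upwards [Ioi_mem_nhds hgt] with v hv using sqRadialProfile_of_one_lt hv

theorem hasDerivAt_sqRadialProfileDeriv_of_mem_Ioo (hW2 : ContDiffOn ℝ 2 W (Icc 0 1)) {u : ℝ}
    (hu : u ∈ Ioo (0 : ℝ) 1) :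
    HasDerivAt (sqRadialProfileDeriv γ W)
      ((derivWithin (derivWithin W (Icc 0 1)) (Icc 0 1) √u - derivWithin W (Icc 0 1) √u / √u)
        / (4 * u)) u := by
  have hW₁ := (hW2.derivWithin (uniqueDiffOn_Icc one_pos) (m := 1) (by norm_num)).differentiableOn
    one_ne_zero
  have hρ := sqrt_mem_Ioo_zero_one hu
  have hsqrt := Real.hasDerivAt_sqrt hu.1.ne'
  have h := ((hasDerivAt_derivWithin_Icc hW₁ hρ).comp u hsqrt).div (hsqrt.const_mul 2)
    (mul_pos two_pos hρ.1).ne'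
  refine (h.congr_deriv ?_).congr_of_eventuallyEq ?_
  · rw [Function.comp_apply]
    set ρ := √u
    have hρ0 : ρ ≠ 0 := hρ.1.ne'
    rw [show u = ρ ^ 2 from (Real.sq_sqrt hu.1.le).symm]
    field_simp
    ring
  · filter_upwards [isOpen_Ioo.mem_nhds hu] with v hv
    exact sqRadialProfileDeriv_of_mem_Ioc (Ioo_subset_Ioc_self hv)

theorem hasDerivAt_sqRadialProfileDeriv_of_one_lt {u : ℝ} (hu : 1 < u) :
    HasDerivAt (sqRadialProfileDeriv γ W) (-(derivWithin W (Icc 0 1) 1 / (2 * u ^ 2))) u := by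
  have h := (hasDerivAt_const u (derivWithin W (Icc 0 1) 1)).div
    ((hasDerivAt_id' u).const_mul 2) (by positivity)
  refine (h.congr_deriv (by field_simp; ring)).congr_of_eventuallyEq ?_
  filter_upwards [Ioi_mem_nhds hu] with v hv using sqRadialProfileDeriv_of_one_lt hv

theorem continuousAt_sqRadialProfile_zero (hW : ContinuousOn W (Icc 0 1)) :
    ContinuousAt (sqRadialProfile γ W) 0 := by
  refine continuousAt_iff_continuous_left'_right'.2 ⟨?_, ?_⟩
  · exact (by fun_prop : Continuous fun u : ℝ => W 0 - W 0 ^ γ / 4 * u).continuousWithinAt.congr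
      (fun u hu => sqRadialProfile_of_nonpos (le_of_lt hu)) (sqRadialProfile_of_nonpos le_rfl)
  · refine ((continuousOn_comp_sqrt_Icc hW 0 ⟨le_rfl, zero_le_one⟩).mono_of_mem_nhdsWithin
      (Icc_mem_nhdsGT one_pos)).congr_of_eventuallyEq ?_ (by simp [sqRadialProfile_of_nonpos])
    filter_upwards [Ioo_mem_nhdsGT one_pos] with v hv
    exact sqRadialProfile_of_mem_Ioc (Ioo_subset_Ioc_self hv)

theorem continuousAt_sqRadialProfile_one (hW : ContinuousOn W (Icc 0 1)) (hW1 : W 1 = 0) :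
    ContinuousAt (sqRadialProfile γ W) 1 := by
  have h1 : sqRadialProfile γ W 1 = W √1 := sqRadialProfile_of_mem_Ioc ⟨one_pos, le_rfl⟩
  refine continuousAt_iff_continuous_left'_right'.2 ⟨?_, ?_⟩
  · refine ((continuousOn_comp_sqrt_Icc hW 1 ⟨zero_le_one, le_rfl⟩).mono_of_mem_nhdsWithin
      (Icc_mem_nhdsLT one_pos)).congr_of_eventuallyEq ?_ h1
    filter_upwards [Ioo_mem_nhdsLT one_pos] with v hv
    exact sqRadialProfile_of_mem_Ioc (Ioo_subset_Ioc_self hv)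
  · have h : ContinuousAt (fun u => derivWithin W (Icc 0 1) 1 / 2 * Real.log u) 1 :=
      continuousAt_const.mul (Real.continuousAt_log one_ne_zero)
    refine h.continuousWithinAt.congr_of_eventuallyEq ?_ (by simp [h1, hW1])
    filter_upwards [self_mem_nhdsWithin] with v hv using sqRadialProfile_of_one_lt hv

theorem continuousAt_sqRadialProfileDeriv_zero (hγ : 0 < γ) (hW2 : ContDiffOn ℝ 2 W (Icc 0 1))
    (hODE : ∀ r ∈ Ioo (0 : ℝ) 1, -(deriv (deriv W) r + deriv W r / r) = W r ^ γ) :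
    ContinuousAt (sqRadialProfileDeriv γ W) 0 := by
  refine continuousAt_iff_continuous_left'_right'.2 ⟨?_, ?_⟩
  · exact continuousWithinAt_const.congr
      (fun u hu => sqRadialProfileDeriv_of_nonpos (le_of_lt hu))
      (sqRadialProfileDeriv_of_nonpos le_rfl)
  · have h := ((tendsto_derivWithin_div_self hγ hW2 hODE).comp
      tendsto_sqrt_nhdsGT_zero).div_const 2
    rw [ContinuousWithinAt, sqRadialProfileDeriv_of_nonpos le_rfl,
      show -(W 0 ^ γ / 4) = -(W 0 ^ γ) / 2 / 2 by ring]
    refine h.congr' ?_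
    filter_upwards [Ioo_mem_nhdsGT one_pos] with v hv
    rw [sqRadialProfileDeriv_of_mem_Ioc (Ioo_subset_Ioc_self hv), Function.comp_apply]
    ring

theorem continuousAt_sqRadialProfileDeriv_one (hW2 : ContDiffOn ℝ 2 W (Icc 0 1)) :
    ContinuousAt (sqRadialProfileDeriv γ W) 1 := by
  have hW₁ : ContinuousOn (derivWithin W (Icc 0 1)) (Icc 0 1) :=
    (hW2.derivWithin (uniqueDiffOn_Icc one_pos) (m := 1) (by norm_num)).continuousOn
  have h1 : sqRadialProfileDeriv γ W 1 = derivWithin W (Icc 0 1) 1 / (2 * 1) := by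
    simp [sqRadialProfileDeriv_of_mem_Ioc]
  refine continuousAt_iff_continuous_left'_right'.2 ⟨?_, ?_⟩
  · have h : ContinuousWithinAt (fun u => derivWithin W (Icc 0 1) √u / (2 * √u)) (Icc 0 1) 1 :=
      (continuousOn_comp_sqrt_Icc hW₁ 1 ⟨zero_le_one, le_rfl⟩).div
        (continuousAt_const.mul Real.continuous_sqrt.continuousAt).continuousWithinAt (by simp)
    refine (h.mono_of_mem_nhdsWithin (Icc_mem_nhdsLT one_pos)).congr_of_eventuallyEq ?_
      (by simp [h1])
    filter_upwards [Ioo_mem_nhdsLT one_pos] with v hv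
    exact sqRadialProfileDeriv_of_mem_Ioc (Ioo_subset_Ioc_self hv)
  · have h : ContinuousAt (fun u => derivWithin W (Icc 0 1) 1 / (2 * u)) 1 :=
      continuousAt_const.div (continuousAt_const.mul continuousAt_id) (by norm_num)
    refine h.continuousWithinAt.congr_of_eventuallyEq ?_ h1
    filter_upwards [self_mem_nhdsWithin] with v hv using sqRadialProfileDeriv_of_one_lt hv

theorem hasDerivAt_sqRadialProfile (hγ : 0 < γ) (hW2 : ContDiffOn ℝ 2 W (Icc 0 1))
    (hW1 : W 1 = 0)
    (hODE : ∀ r ∈ Ioo (0 : ℝ) 1, -(deriv (deriv W) r + deriv W r / r) = W r ^ γ) (u : ℝ) :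
    HasDerivAt (sqRadialProfile γ W) (sqRadialProfileDeriv γ W u) u := by
  by_cases hu0 : u = 0
  · subst hu0
    refine hasDerivAt_of_eventually_hasDerivAt ?_ (continuousAt_sqRadialProfile_zero
      hW2.continuousOn) (continuousAt_sqRadialProfileDeriv_zero hγ hW2 hODE)
    filter_upwards [self_mem_nhdsWithin, nhdsWithin_le_nhds (eventually_ne_nhds zero_ne_one)]
      with v hv0 hv1 using hasDerivAt_sqRadialProfile_of_ne hW2 hv0 hv1
  by_cases hu1 : u = 1
  · subst hu1
    refine hasDerivAt_of_eventually_hasDerivAt ?_ (continuousAt_sqRadialProfile_one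
      hW2.continuousOn hW1) (continuousAt_sqRadialProfileDeriv_one hW2)
    filter_upwards [self_mem_nhdsWithin, nhdsWithin_le_nhds (eventually_ne_nhds one_ne_zero)]
      with v hv1 hv0 using hasDerivAt_sqRadialProfile_of_ne hW2 hv0 hv1
  exact hasDerivAt_sqRadialProfile_of_ne hW2 hu0 hu1

theorem continuous_sqRadialProfileDeriv (hγ : 0 < γ) (hW2 : ContDiffOn ℝ 2 W (Icc 0 1))
    (hODE : ∀ r ∈ Ioo (0 : ℝ) 1, -(deriv (deriv W) r + deriv W r / r) = W r ^ γ) :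
    Continuous (sqRadialProfileDeriv γ W) := by
  refine continuous_iff_continuousAt.2 fun u => ?_
  rcases lt_trichotomy u 0 with hneg | rfl | hpos
  · refine (continuousAt_const (y := -(W 0 ^ γ / 4))).congr ?_
    filter_upwards [Iio_mem_nhds hneg] with v hv using (sqRadialProfileDeriv_of_nonpos hv.le).symm
  · exact continuousAt_sqRadialProfileDeriv_zero hγ hW2 hODE
  rcases lt_trichotomy u 1 with hlt | rfl | hgt
  · exact (hasDerivAt_sqRadialProfileDeriv_of_mem_Ioo hW2 ⟨hpos, hlt⟩).continuousAt
  · exact continuousAt_sqRadialProfileDeriv_one hW2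
  · exact (hasDerivAt_sqRadialProfileDeriv_of_one_lt hgt).continuousAt

theorem sqRadialProfile_ode (hγ : 0 < γ) (hW2 : ContDiffOn ℝ 2 W (Icc 0 1))
    (hWpos : ∀ r ∈ Ico (0 : ℝ) 1, 0 < W r) (hκ : derivWithin W (Icc 0 1) 1 < 0)
    (hODE : ∀ r ∈ Ioo (0 : ℝ) 1, -(deriv (deriv W) r + deriv W r / r) = W r ^ γ) {u : ℝ}
    (hu : 0 < u) (hu1 : u ≠ 1) :
    ∃ φ₂, HasDerivAt (sqRadialProfileDeriv γ W) φ₂ u ∧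
      -(4 * sqRadialProfileDeriv γ W u + 4 * u * φ₂) = max (sqRadialProfile γ W u) 0 ^ γ := by
  rcases lt_or_gt_of_ne hu1 with hlt | hgt
  · refine ⟨_, hasDerivAt_sqRadialProfileDeriv_of_mem_Ioo hW2 ⟨hu, hlt⟩, ?_⟩
    have hρ := sqrt_mem_Ioo_zero_one ⟨hu, hlt⟩
    rw [sqRadialProfileDeriv_of_mem_Ioc ⟨hu, hlt.le⟩, sqRadialProfile_of_mem_Ioc ⟨hu, hlt.le⟩,
      max_eq_left (hWpos _ (Ioo_subset_Ico_self hρ)).le, ← radial_ode_derivWithin hW2 hODE hρ]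
    set ρ := √u
    have hρ0 : ρ ≠ 0 := hρ.1.ne'
    rw [show u = ρ ^ 2 from (Real.sq_sqrt hu.le).symm]
    field_simp
    ring
  · refine ⟨_, hasDerivAt_sqRadialProfileDeriv_of_one_lt hgt, ?_⟩
    have hneg : sqRadialProfile γ W u < 0 := by
      rw [sqRadialProfile_of_one_lt hgt]
      exact mul_neg_of_neg_of_pos (by linarith) (Real.log_pos hgt)
    rw [max_eq_right hneg.le, Real.zero_rpow hγ.ne', sqRadialProfileDeriv_of_one_lt hgt]
    field_simp
    ring

theorem sqRadialProfile_ode_zero (hW0 : 0 ≤ W 0) :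
    -(4 * sqRadialProfileDeriv γ W 0) = max (sqRadialProfile γ W 0) 0 ^ γ := by
  rw [sqRadialProfileDeriv_of_nonpos le_rfl, sqRadialProfile_of_nonpos le_rfl, mul_zero,
    sub_zero, max_eq_left hW0]
  ring

theorem ite_norm_le_eq_sqRadialProfile {E : Type*} [NormedAddCommGroup E] {s : ℝ} (hs : 0 < s)
    (c : ℝ) (x : E) :
    (if ‖x‖ ≤ s then c * W (‖x‖ / s) else c * derivWithin W (Icc 0 1) 1 * Real.log (‖x‖ / s))
      = c * sqRadialProfile γ W (‖x‖ ^ 2 / s ^ 2) := by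
  have hsq : ‖x‖ ^ 2 / s ^ 2 = (‖x‖ / s) ^ 2 := (div_pow _ _ _).symm
  split_ifs with hxs
  · rcases (norm_nonneg x).eq_or_lt with hx0 | hx0
    · simp [← hx0, sqRadialProfile_of_nonpos]
    · have hu : ‖x‖ ^ 2 / s ^ 2 ≤ 1 := by
        rw [hsq]
        exact pow_le_one₀ (by positivity) ((div_le_one hs).2 hxs)
      rw [sqRadialProfile_of_mem_Ioc ⟨by positivity, hu⟩, hsq, Real.sqrt_sq (by positivity)]
  · have h1 : 1 < ‖x‖ / s := (one_lt_div hs).2 (not_le.1 hxs)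
    rw [sqRadialProfile_of_one_lt (by rw [hsq]; exact one_lt_pow₀ h1 two_ne_zero), hsq,
      Real.log_pow]
    push_cast
    ring

end Plasma

theorem inv_sq_mul_max_rpow_scale {γ ε s : ℝ} (hγ : 1 < γ) (hε : 0 < ε) (hs : 0 < s) (y : ℝ) :
    (ε ^ 2)⁻¹ * max ((ε / s) ^ (2 / (γ - 1)) * y) 0 ^ γ
      = (ε / s) ^ (2 / (γ - 1)) / s ^ 2 * max y 0 ^ γ := by
  have hεs : 0 < ε / s := div_pos hε hs
  have hc : 0 < (ε / s) ^ (2 / (γ - 1)) := Real.rpow_pos_of_pos hεs _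
  have hcγ : ((ε / s) ^ (2 / (γ - 1))) ^ γ = (ε / s) ^ 2 * (ε / s) ^ (2 / (γ - 1)) := by
    have h : ((ε / s) ^ (2 / (γ - 1))) ^ (γ - 1) = (ε / s) ^ 2 := by
      rw [← Real.rpow_mul hεs.le, div_mul_cancel₀ _ (by linarith : γ - 1 ≠ 0)]
      norm_cast
    rw [← h, Real.rpow_sub_one hc.ne', div_mul_cancel₀ _ hc.ne']
  rw [← mul_zero ((ε / s) ^ (2 / (γ - 1))), ← mul_max_of_nonneg _ _ hc.le, mul_zero,
    Real.mul_rpow hc.le (le_max_right _ _), hcγ]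
  field_simp

section Vortex

variable {γ ε s : ℝ} {W : ℝ → ℝ}

noncomputable def vortexProfile (γ ε s : ℝ) (W : ℝ → ℝ) (t : ℝ) : ℝ :=
  (ε / s) ^ (2 / (γ - 1)) * sqRadialProfile γ W (t / s ^ 2)

noncomputable def vortexProfileDeriv (γ ε s : ℝ) (W : ℝ → ℝ) (t : ℝ) : ℝ :=
  (ε / s) ^ (2 / (γ - 1)) / s ^ 2 * sqRadialProfileDeriv γ W (t / s ^ 2)

theorem hasDerivAt_vortexProfile (hγ : 0 < γ) (hW2 : ContDiffOn ℝ 2 W (Icc 0 1))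
    (hW1 : W 1 = 0)
    (hODE : ∀ r ∈ Ioo (0 : ℝ) 1, -(deriv (deriv W) r + deriv W r / r) = W r ^ γ) (t : ℝ) :
    HasDerivAt (vortexProfile γ ε s W) (vortexProfileDeriv γ ε s W t) t :=
  (hasDerivAt_sqRadialProfile hγ hW2 hW1 hODE _).const_mul_comp_div_const

theorem continuous_vortexProfileDeriv (hγ : 0 < γ) (hW2 : ContDiffOn ℝ 2 W (Icc 0 1))
    (hODE : ∀ r ∈ Ioo (0 : ℝ) 1, -(deriv (deriv W) r + deriv W r / r) = W r ^ γ) :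
    Continuous (vortexProfileDeriv γ ε s W) :=
  continuous_const.mul ((continuous_sqRadialProfileDeriv hγ hW2 hODE).comp
    (continuous_id.div_const _))

theorem vortexProfile_ode (hγ : 1 < γ) (hε : 0 < ε) (hs : 0 < s)
    (hW2 : ContDiffOn ℝ 2 W (Icc 0 1)) (hWpos : ∀ r ∈ Ico (0 : ℝ) 1, 0 < W r)
    (hκ : derivWithin W (Icc 0 1) 1 < 0)
    (hODE : ∀ r ∈ Ioo (0 : ℝ) 1, -(deriv (deriv W) r + deriv W r / r) = W r ^ γ) {t : ℝ}
    (ht : 0 < t) (hts : t ≠ s ^ 2) :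
    ∃ g, HasDerivAt (vortexProfileDeriv γ ε s W) g t ∧
      -(4 * vortexProfileDeriv γ ε s W t + 4 * t * g)
        = (ε ^ 2)⁻¹ * max (vortexProfile γ ε s W t) 0 ^ γ := by
  obtain ⟨φ₂, hφ₂, hode⟩ := sqRadialProfile_ode (by linarith) hW2 hWpos hκ hODE
    (div_pos ht (by positivity)) ((div_eq_one_iff_eq (by positivity)).not.2 hts)
  refine ⟨_, hφ₂.const_mul_comp_div_const, ?_⟩
  rw [vortexProfileDeriv, vortexProfile, inv_sq_mul_max_rpow_scale hγ hε hs, ← hode]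
  field_simp

theorem vortexProfile_ode_zero (hγ : 1 < γ) (hε : 0 < ε) (hs : 0 < s) (hW0 : 0 ≤ W 0) :
    -(4 * vortexProfileDeriv γ ε s W 0) = (ε ^ 2)⁻¹ * max (vortexProfile γ ε s W 0) 0 ^ γ := by
  rw [vortexProfileDeriv, vortexProfile, inv_sq_mul_max_rpow_scale hγ hε hs, zero_div,
    ← sqRadialProfile_ode_zero hW0]
  ring

end Vortex

theorem vortex_profile_C1_and_equation_general (γ ε s : ℝ) (hγ : 1 < γ) (hε : 0 < ε) (hs : 0 < s)
    (W : ℝ → ℝ)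
    (hW2 : ContDiffOn ℝ 2 W (Set.Icc 0 1))
    (hWpos : ∀ r ∈ Set.Ico (0 : ℝ) 1, 0 < W r)
    (hW1 : W 1 = 0)
    (hW'1 : deriv W 1 < 0)
    (hODE : ∀ r ∈ Set.Ioo (0 : ℝ) 1,
      -(deriv (deriv W) r + deriv W r / r) = W r ^ γ)
    (V : EuclideanSpace ℝ (Fin 2) → ℝ)
    (hV : ∀ x, V x = if ‖x‖ ≤ s then (ε / s) ^ (2 / (γ - 1)) * W (‖x‖ / s)
      else (ε / s) ^ (2 / (γ - 1)) * deriv W 1 * Real.log (‖x‖ / s)) :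
    ContDiff ℝ 1 V ∧
      ∀ x : EuclideanSpace ℝ (Fin 2), ‖x‖ ≠ s →
        DifferentiableAt ℝ (fderiv ℝ V) x ∧
          -(∑ i : Fin 2, fderiv ℝ (fun z => fderiv ℝ V z (EuclideanSpace.single i 1)) x
              (EuclideanSpace.single i 1))
            = (ε ^ 2)⁻¹ * max (V x) 0 ^ γ := by
  have hγ0 : 0 < γ := by linarith
  have hκ : deriv W 1 = derivWithin W (Icc 0 1) 1 :=
    ((differentiableAt_of_deriv_ne_zero hW'1.ne).derivWithin
      (uniqueDiffOn_Icc one_pos 1 ⟨zero_le_one, le_rfl⟩)).symm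
  obtain rfl : V = fun x => vortexProfile γ ε s W (‖x‖ ^ 2) :=
    funext fun x => (hV x).trans (hκ ▸ ite_norm_le_eq_sqRadialProfile hs _ x)
  have hG := hasDerivAt_vortexProfile (ε := ε) (s := s) hγ0 hW2 hW1 hODE
  have hG' := continuous_vortexProfileDeriv (ε := ε) (s := s) hγ0 hW2 hODE
  refine ⟨(contDiff_one_iff_deriv.2 ⟨fun t => (hG t).differentiableAt,
    (funext fun t => (hG t).deriv) ▸ hG'⟩).comp (contDiff_norm_sq ℝ), fun x hx => ?_⟩
  rcases eq_or_ne x 0 with rfl | hx0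
  · refine ⟨(hasFDerivAt_fderiv_comp_norm_sq_zero hG hG'.continuousAt).differentiableAt, ?_⟩
    beta_reduce
    rw [sum_fderiv_fderiv_comp_norm_sq_zero hG hG'.continuousAt, norm_zero, zero_pow two_ne_zero, Fintype.card_fin,
      ← vortexProfile_ode_zero hγ hε hs (hWpos 0 ⟨le_rfl, one_pos⟩).le]
    push_cast
    ring
  · obtain ⟨g, hg, hode⟩ := vortexProfile_ode hγ hε hs hW2 hWpos (hκ ▸ hW'1) hODE
      (t := ‖x‖ ^ 2) (by positivity) (by rwa [Ne, sq_eq_sq₀ (norm_nonneg x) hs.le])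
    refine ⟨(hasFDerivAt_fderiv_comp_norm_sq hG hg).differentiableAt, ?_⟩
    beta_reduce
    rw [sum_fderiv_fderiv_comp_norm_sq hG hg, Fintype.card_fin, ← hode]
    push_cast
    ring

/-- The regularized vortex building block `V` (rescaled generalized plasma ground state inside
the core `B_s(0)`, logarithmic tail outside) is `C¹` on all of `ℝ²`, and away from the matching
circle `|x| = s` it is twice differentiable and satisfies `-ΔV = ε⁻² (V₊)^γ`. -/
theorem vortex_profile_C1_and_equation (γ ε s : ℝ) (hγ : 1 < γ) (hε : 0 < ε) (hs : 0 < s)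
    (W : ℝ → ℝ)
    (hW2 : ContDiffOn ℝ 2 W (Set.Icc 0 1))
    (hWpos : ∀ r ∈ Set.Ico (0 : ℝ) 1, 0 < W r)
    (hW1 : W 1 = 0)
    (hW'0 : deriv W 0 = 0)
    (hW'1 : deriv W 1 < 0)
    (hODE : ∀ r ∈ Set.Ioo (0 : ℝ) 1,
      -(deriv (deriv W) r + deriv W r / r) = W r ^ γ)
    (V : EuclideanSpace ℝ (Fin 2) → ℝ)
    (hV : ∀ x, V x = if ‖x‖ ≤ s then (ε / s) ^ (2 / (γ - 1)) * W (‖x‖ / s)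
      else (ε / s) ^ (2 / (γ - 1)) * deriv W 1 * Real.log (‖x‖ / s)) :
    ContDiff ℝ 1 V ∧
      ∀ x : EuclideanSpace ℝ (Fin 2), ‖x‖ ≠ s →
        DifferentiableAt ℝ (fderiv ℝ V) x ∧
          -(∑ i : Fin 2, fderiv ℝ (fun z => fderiv ℝ V z (EuclideanSpace.single i 1)) x
              (EuclideanSpace.single i 1))
            = (ε ^ 2)⁻¹ * max (V x) 0 ^ γ :=
  vortex_profile_C1_and_equation_general γ ε s hγ hε hs W hW2 hWpos hW1 hW'1 hODE V hV
end

section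
/- Fix θ ∈ (0, π) and φ ∈ ℝ, and for (θ', φ') ≠ (θ, φ) define D(θ',φ') = −(1/4π)·ln(1 − cos θ·cos θ' − sin θ·sin θ'·cos(φ − φ')) + (1/4π)·ln((θ − θ')² + sin²θ·(φ − φ')²). Then D extends continuously to the point (θ, φ), with limit value −(1/4π)·ln(1/2) as (θ', φ') → (θ, φ). -/
open Filter Topology Real

/-! With `ψ = φ - φ'`, the argument of the spherical logarithm is
`(1 - cos (θ - θ')) + sin θ sin θ' (1 - cos ψ)`, and `1 - cos x = x² · sinc (x/2)² / 2`.
Hence it equals `a f + b g`, where `a = (θ - θ')²` and `b = sin² θ · ψ²` are the two summands of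
the planar argument and `f`, `g` are continuous with value `1/2` on the diagonal. The ratio of
the two arguments is then a weighted mean of `f` and `g`, so it tends to `1/2`, and `D` is
`-(1/4π)` times its logarithm. -/

lemma min_le_mul_add_mul_div_add {a b x y : ℝ} (ha : 0 ≤ a) (hb : 0 ≤ b) (hab : 0 < a + b) :
    min x y ≤ (a * x + b * y) / (a + b) := by
  rw [le_div_iff₀ hab]
  nlinarith [min_le_left x y, min_le_right x y]

lemma mul_add_mul_div_add_le_max {a b x y : ℝ} (ha : 0 ≤ a) (hb : 0 ≤ b) (hab : 0 < a + b) :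
    (a * x + b * y) / (a + b) ≤ max x y := by
  rw [div_le_iff₀ hab]
  nlinarith [le_max_left x y, le_max_right x y]

theorem Filter.Tendsto.mul_add_mul_div_add {α : Type*} {l : Filter α} {a b f g : α → ℝ} {c : ℝ}
    (hf : Tendsto f l (𝓝 c)) (hg : Tendsto g l (𝓝 c)) (ha : ∀ᶠ x in l, 0 ≤ a x)
    (hb : ∀ᶠ x in l, 0 ≤ b x) (hab : ∀ᶠ x in l, 0 < a x + b x) :
    Tendsto (fun x => (a x * f x + b x * g x) / (a x + b x)) l (𝓝 c) := by
  have hmin : Tendsto (fun x => min (f x) (g x)) l (𝓝 c) := by simpa using hf.min hg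
  have hmax : Tendsto (fun x => max (f x) (g x)) l (𝓝 c) := by simpa using hf.max hg
  refine tendsto_of_tendsto_of_tendsto_of_le_of_le' hmin hmax ?_ ?_
  · filter_upwards [ha, hb, hab] with x ha hb hab using min_le_mul_add_mul_div_add ha hb hab
  · filter_upwards [ha, hb, hab] with x ha hb hab using mul_add_mul_div_add_le_max ha hb hab

theorem Filter.Tendsto.log_sub_log {α : Type*} {l : Filter α} {u v : α → ℝ} {c : ℝ} (hc : c ≠ 0)
    (h : Tendsto (fun x => u x / v x) l (𝓝 c)) :
    Tendsto (fun x => Real.log (u x) - Real.log (v x)) l (𝓝 (Real.log c)) := by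
  refine ((continuousAt_log hc).tendsto.comp h).congr' ?_
  filter_upwards [h.eventually_ne hc] with x hx
  obtain ⟨hu, hv⟩ := div_ne_zero_iff.mp hx
  exact log_div hu hv

lemma one_sub_cos_eq_sq_mul_sinc_sq (x : ℝ) : 1 - cos x = x ^ 2 * (sinc (x / 2) ^ 2 / 2) := by
  have hsin : sin (x / 2) = x / 2 * sinc (x / 2) := by
    rcases eq_or_ne x 0 with rfl | hx
    · simp
    · rw [sinc_of_ne_zero (by positivity)]
      field_simp
  calc 1 - cos x = 1 - cos (2 * (x / 2)) := by rw [mul_div_cancel₀ x two_ne_zero]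
    _ = 2 * sin (x / 2) ^ 2 := by rw [cos_two_mul_eq_one_sub]; ring
    _ = x ^ 2 * (sinc (x / 2) ^ 2 / 2) := by rw [hsin]; ring

-- Where `sin θ = 0`, the junk value of `sin θ' / sin θ` is harmless: it is multiplied by `sin θ ^ 2`.
lemma one_sub_cos_mul_cos_sub_sin_mul_sin_mul_cos_s15 (θ θ' ψ : ℝ) :
    1 - cos θ * cos θ' - sin θ * sin θ' * cos ψ =
      (θ - θ') ^ 2 * (sinc ((θ - θ') / 2) ^ 2 / 2)
        + sin θ ^ 2 * ψ ^ 2 * (sin θ' / sin θ * (sinc (ψ / 2) ^ 2 / 2)) := by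
  have key : 1 - cos θ * cos θ' - sin θ * sin θ' * cos ψ =
      (1 - cos (θ - θ')) + sin θ * sin θ' * (1 - cos ψ) := by
    rw [cos_sub]; ring
  rw [key, one_sub_cos_eq_sq_mul_sinc_sq, one_sub_cos_eq_sq_mul_sinc_sq]
  field_simp

lemma sq_sub_add_sq_mul_sq_sub_pos {c : ℝ} (hc : c ≠ 0) {p q : ℝ × ℝ} (hpq : p ≠ q) :
    0 < (q.1 - p.1) ^ 2 + c ^ 2 * (q.2 - p.2) ^ 2 := by
  rcases eq_or_ne p.1 q.1 with h₁ | h₁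
  · have h₂ : q.2 - p.2 ≠ 0 := sub_ne_zero.2 fun h₂ => hpq (Prod.ext h₁ h₂.symm)
    rw [h₁, sub_self]
    positivity
  · have : q.1 - p.1 ≠ 0 := sub_ne_zero.2 h₁.symm
    positivity

/-- Continuity of the regular part of the spherical Green function across the diagonal:
away from the poles, the difference `D = G - Γ - (ln 2)/(4π)` of the spherical Green kernel
and the planar comparison kernel tends to `-(1/4π) ln(1/2)` at the diagonal. -/
theorem green_regular_part_tendsto (θ φ : ℝ) (hθ : θ ∈ Set.Ioo 0 Real.pi) :
    Filter.Tendsto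
      (fun p : ℝ × ℝ =>
        -(1 / (4 * Real.pi)) *
            Real.log (1 - Real.cos θ * Real.cos p.1
              - Real.sin θ * Real.sin p.1 * Real.cos (φ - p.2))
          + (1 / (4 * Real.pi)) *
              Real.log ((θ - p.1) ^ 2 + Real.sin θ ^ 2 * (φ - p.2) ^ 2))
      (𝓝[≠] ((θ, φ) : ℝ × ℝ))
      (𝓝 (-(1 / (4 * Real.pi)) * Real.log (1 / 2))) := by
  have hs : sin θ ≠ 0 := (sin_pos_of_pos_of_lt_pi hθ.1 hθ.2).ne'
  have hf : Tendsto (fun p : ℝ × ℝ => sinc ((θ - p.1) / 2) ^ 2 / 2) (𝓝[≠] (θ, φ)) (𝓝 (1 / 2)) :=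
    ((by fun_prop : Continuous fun p : ℝ × ℝ => sinc ((θ - p.1) / 2) ^ 2 / 2).tendsto' _ _
      (by simp)).mono_left nhdsWithin_le_nhds
  have hg : Tendsto (fun p : ℝ × ℝ => sin p.1 / sin θ * (sinc ((φ - p.2) / 2) ^ 2 / 2))
      (𝓝[≠] (θ, φ)) (𝓝 (1 / 2)) :=
    ((by fun_prop : Continuous fun p : ℝ × ℝ =>
      sin p.1 / sin θ * (sinc ((φ - p.2) / 2) ^ 2 / 2)).tendsto' _ _ (by simp [hs])).mono_left
        nhdsWithin_le_nhds
  have hden : ∀ᶠ p : ℝ × ℝ in 𝓝[≠] (θ, φ), 0 < (θ - p.1) ^ 2 + sin θ ^ 2 * (φ - p.2) ^ 2 := by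
    filter_upwards [self_mem_nhdsWithin] with p hp
    exact sq_sub_add_sq_mul_sq_sub_pos (q := (θ, φ)) hs hp
  have hratio := hf.mul_add_mul_div_add hg (.of_forall fun p => sq_nonneg _)
    (.of_forall fun p => by positivity) hden
  simp_rw [← one_sub_cos_mul_cos_sub_sin_mul_sin_mul_cos_s15] at hratio
  convert (hratio.log_sub_log (by norm_num)).const_mul (-(1 / (4 * π))) using 2
  ring
end
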